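/- For all real numbers a > 0 and b > 0: ∫_1^{∞} ∫_{−1}^{1} (a·s − i·b·x)^{−4} dx ds = 2 / (3·(a² + b²)²). -/

import Mathlib

/-!
Integrate in `x` first: `(as - ibx)⁻⁴` has the antiderivative `(3ib)⁻¹ (as - ibx)⁻³`, so the
inner integral is `(3ib)⁻¹ ((as - ib)⁻³ - (as + ib)⁻³)`. Each term is then integrated over
`s ∈ (1, ∞)` with the antiderivative `-(2a)⁻¹ (c + as)⁻²`, which is legitimate because
`Re (c + as) ≥ as` makes the integrand `O(s⁻³)`. The two boundary values combine through
`(a + ib)(a - ib) = a² + b²`.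
-/

open MeasureTheory Filter Topology Complex

lemma le_norm_add_ofReal {c : ℂ} (hc : 0 ≤ c.re) (r : ℝ) : r ≤ ‖c + r‖ := by
  have := re_le_norm (c + r)
  simp only [add_re, ofReal_re] at this
  linarith

lemma norm_inv_pow_add_ofReal_le {c : ℂ} (hc : 0 ≤ c.re) {r : ℝ} (hr : 0 < r) (k : ℕ) :
    ‖((c + r) ^ k)⁻¹‖ ≤ (r ^ k)⁻¹ := by
  rw [norm_inv, norm_pow]
  gcongr
  exact le_norm_add_ofReal hc r

lemma add_ofReal_ne_zero {c : ℂ} (hc : 0 ≤ c.re) {r : ℝ} (hr : 0 < r) : c + r ≠ 0 :=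
  norm_pos_iff.mp (hr.trans_le (le_norm_add_ofReal hc r))

lemma hasDerivAt_inv_pow_affine (p q : ℂ) (n : ℕ) {x : ℝ} (hx : p + q * x ≠ 0) :
    HasDerivAt (fun x : ℝ => ((p + q * x) ^ (n + 1))⁻¹)
      (-((n + 1) * q) * ((p + q * x) ^ (n + 2))⁻¹) x := by
  have haff : HasDerivAt (fun x : ℝ => p + q * x) q x := by
    simpa using ((hasDerivAt_id x).ofReal_comp.const_mul q).const_add p
  refine ((haff.pow (n + 1)).inv (pow_ne_zero _ hx)).congr_deriv ?_
  simp only [Pi.pow_apply]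
  field_simp
  push_cast
  ring

lemma integral_inv_pow_affine (p q : ℂ) (n : ℕ) {α β : ℝ} (hq : q ≠ 0)
    (h : ∀ x ∈ Set.uIcc α β, p + q * x ≠ 0) :
    ∫ x in α..β, ((p + q * x) ^ (n + 2))⁻¹ =
      ((n + 1) * q)⁻¹ * (((p + q * α) ^ (n + 1))⁻¹ - ((p + q * β) ^ (n + 1))⁻¹) := by
  have hnq : ((n + 1) * q : ℂ) ≠ 0 := mul_ne_zero (Nat.cast_add_one_ne_zero n) hq
  rw [intervalIntegral.integral_eq_sub_of_hasDerivAt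
    (f := fun x : ℝ => -((n + 1) * q)⁻¹ * ((p + q * x) ^ (n + 1))⁻¹)]
  · ring
  · intro x hx
    refine ((hasDerivAt_inv_pow_affine p q n (h x hx)).const_mul _).congr_deriv ?_
    field_simp
  · refine ContinuousOn.intervalIntegrable (ContinuousOn.inv₀ (by fun_prop) ?_)
    exact fun x hx => pow_ne_zero _ (h x hx)

lemma integrableOn_Ioi_inv_pow_affine {a t : ℝ} (ha : 0 < a) (ht : 0 < t) {c : ℂ}
    (hc : 0 ≤ c.re) {k : ℕ} (hk : 2 ≤ k) :
    IntegrableOn (fun s : ℝ => ((c + a * s) ^ k)⁻¹) (Set.Ioi t) := by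
  have hdom : IntegrableOn (fun s : ℝ => (a ^ k)⁻¹ * s ^ (-(k : ℝ))) (Set.Ioi t) := by
    refine (integrableOn_Ioi_rpow_of_lt ?_ ht).const_mul _
    have : (2 : ℝ) ≤ k := by exact_mod_cast hk
    linarith
  refine hdom.mono' ?_ ?_
  · refine ContinuousOn.aestronglyMeasurable ?_ measurableSet_Ioi
    refine ContinuousOn.inv₀ (by fun_prop) fun s hs => pow_ne_zero _ ?_
    exact_mod_cast add_ofReal_ne_zero hc (mul_pos ha (ht.trans hs))
  · filter_upwards [ae_restrict_mem measurableSet_Ioi] with s hs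
    have has : 0 < a * s := mul_pos ha (ht.trans hs)
    rw [Real.rpow_neg (ht.trans hs).le, Real.rpow_natCast, ← mul_inv, ← mul_pow]
    exact_mod_cast norm_inv_pow_add_ofReal_le hc has k

lemma integral_Ioi_inv_pow_affine {a t : ℝ} (ha : 0 < a) (ht : 0 < t) {c : ℂ} (hc : 0 ≤ c.re)
    (n : ℕ) :
    ∫ s in Set.Ioi t, ((c + a * s) ^ (n + 2))⁻¹ =
      ((n + 1) * (a : ℂ))⁻¹ * ((c + a * t) ^ (n + 1))⁻¹ := by
  have hpos : ∀ s ∈ Set.Ici t, 0 < a * s := fun s hs => mul_pos ha (ht.trans_le hs)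
  have hne : ∀ s ∈ Set.Ici t, c + a * s ≠ 0 := by
    intro s hs
    exact_mod_cast add_ofReal_ne_zero hc (hpos s hs)
  have ha' : (a : ℂ) ≠ 0 := ofReal_ne_zero.mpr ha.ne'
  rw [integral_Ioi_of_hasDerivAt_of_tendsto' (m := 0)
    (f := fun s : ℝ => -((n + 1) * (a : ℂ))⁻¹ * ((c + a * s) ^ (n + 1))⁻¹)]
  · ring
  · intro s hs
    refine ((hasDerivAt_inv_pow_affine c a n (hne s hs)).const_mul _).congr_deriv ?_
    field_simp
  · exact integrableOn_Ioi_inv_pow_affine ha ht hc (by omega)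
  · have hlim : Tendsto (fun s : ℝ => ((a * s) ^ (n + 1))⁻¹) atTop (𝓝 0) :=
      tendsto_inv_atTop_zero.comp
        ((tendsto_pow_atTop n.succ_ne_zero).comp (tendsto_id.const_mul_atTop ha))
    have h0 : Tendsto (fun s : ℝ => ((c + a * s) ^ (n + 1))⁻¹) atTop (𝓝 0) := by
      refine squeeze_zero_norm' ?_ hlim
      filter_upwards [eventually_ge_atTop t] with s hs using by
        exact_mod_cast norm_inv_pow_add_ofReal_le hc (hpos s hs) (n + 1)
    simpa using h0.const_mul (-((n + 1) * (a : ℂ))⁻¹)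

lemma inv_sq_add_I_mul_sub_inv_sq_sub_I_mul {a b : ℂ} (h : a ^ 2 + b ^ 2 ≠ 0) :
    ((I * b + a) ^ 2)⁻¹ - ((-(I * b) + a) ^ 2)⁻¹ = -4 * I * a * b / (a ^ 2 + b ^ 2) ^ 2 := by
  have hprod : (I * b + a) * (-(I * b) + a) = a ^ 2 + b ^ 2 := by
    linear_combination (-b ^ 2) * I_sq
  rw [← hprod] at h ⊢
  have hplus := left_ne_zero_of_mul h
  have hminus := right_ne_zero_of_mul h
  field_simp
  ring

theorem statement_15 (a b : ℝ) (ha : 0 < a) (hb : 0 < b) :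
    (∫ s in Set.Ici (1 : ℝ),
        ∫ x in (-1 : ℝ)..1,
          (((a * s : ℝ) - Complex.I * ((b * x : ℝ) : ℂ)) ^ 4)⁻¹) =
      ((2 / (3 * (a ^ 2 + b ^ 2) ^ 2) : ℝ) : ℂ) := by
  have hinner : ∀ s ∈ Set.Ioi (1 : ℝ),
      (∫ x in (-1 : ℝ)..1, (((a * s : ℝ) - I * ((b * x : ℝ) : ℂ)) ^ 4)⁻¹) =
        (3 * -(I * b))⁻¹ * (((I * b + a * s) ^ 3)⁻¹ - ((-(I * b) + a * s) ^ 3)⁻¹) := by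
    intro s hs
    have has : 0 < a * s := mul_pos ha (one_pos.trans hs)
    calc _ = ∫ x in (-1 : ℝ)..1, (((a * s : ℂ) + -(I * b) * x) ^ (2 + 2))⁻¹ := by
          congr 1; ext x; push_cast; ring
      _ = _ := by
          rw [integral_inv_pow_affine _ _ 2 (by simp [hb.ne'])]
          · push_cast; ring
          · intro x _ h
            simpa [has.ne'] using congrArg re h
  rw [integral_Ici_eq_integral_Ioi, setIntegral_congr_fun measurableSet_Ioi hinner,
    integral_const_mul, integral_sub, integral_Ioi_inv_pow_affine ha one_pos (by simp) 1,
    integral_Ioi_inv_pow_affine ha one_pos (by simp) 1]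
  · have hab : (a : ℂ) ^ 2 + b ^ 2 ≠ 0 := by
      exact_mod_cast (by positivity : a ^ 2 + b ^ 2 ≠ 0)
    simp only [ofReal_one, Nat.cast_one, mul_one, one_add_one_eq_two]
    rw [← mul_sub, inv_sq_add_I_mul_sub_inv_sq_sub_I_mul hab]
    have ha' : (a : ℂ) ≠ 0 := ofReal_ne_zero.mpr ha.ne'
    have hb' : (b : ℂ) ≠ 0 := ofReal_ne_zero.mpr hb.ne'
    push_cast
    field_simp
    ring
  all_goals exact integrableOn_Ioi_inv_pow_affine ha one_pos (by simp) (by norm_num)
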